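/- For the edge-reinforced random walk on the square (cycle of length 4), the process κ_n = ∑_{i=0}^{3} (-1)^i W*(X_n^{e_i}) is a martingale, where W*(n) = ∑_{k=0}^{n-1} 1/W(k). -/

import Mathlib

/-!
Let the walker sit at vertex `v`, and let `a`, `b` be the current counts of the two edges
`e_v` and `e_{v-1}` at `v`. Crossing `e_v` raises `κ` by `(-1)^v / W a`, crossing `e_{v-1}`
raises it by `(-1)^(v-1) / W b = -(-1)^v / W b`, since adjacent edges of an even cycle carry
opposite signs. The walker crosses them with probabilities proportional to `W a` and `W b`,
so the conditional mean of the increment is `(-1)^v (1 - 1) / (W a + W b) = 0`.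
-/

open MeasureTheory Filter

noncomputable def wStar (W : ℕ → ℝ) (m : ℕ) : ℝ := ∑ k ∈ Finset.range m, 1 / W k

lemma wStar_add_ite (W : ℕ → ℝ) (m : ℕ) (p : Prop) [Decidable p] :
    wStar W (m + if p then 1 else 0) = wStar W m + if p then 1 / W m else 0 := by
  split_ifs <;> simp [wStar, Finset.sum_range_succ]

lemma sum_range_neg_one_pow_mul_ite_natCast_eq {N : ℕ} [NeZero N] (e : ZMod N)
    (c : ZMod N → ℝ) :
    ∑ i ∈ Finset.range N, (-1 : ℝ) ^ i * (if (i : ZMod N) = e then c i else 0) =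
      (-1) ^ e.val * c e := by
  rw [Finset.sum_eq_single_of_mem e.val (Finset.mem_range.2 e.val_lt)]
  · simp
  · intro i hi hne
    rw [if_neg, mul_zero]
    rintro rfl
    exact hne (ZMod.val_natCast_of_lt (Finset.mem_range.1 hi)).symm

lemma ZMod.four_crosses_iff {v w : ZMod 4} (hw : w = v + 1 ∨ w = v - 1) (i : ZMod 4) :
    ((v = i ∧ w = i + 1) ∨ (v = i + 1 ∧ w = i)) ↔ i = if w = v + 1 then v else v - 1 := by
  revert v w i; decide

lemma ZMod.four_neg_one_pow_val_sub_one (v : ZMod 4) :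
    (-1 : ℝ) ^ (v - 1).val = -(-1) ^ v.val := by
  have hval : (v - 1).val + 1 = v.val ∨ (v - 1).val = v.val + 3 := by revert v; decide
  rcases hval with hval | hval
  · rw [← hval, pow_succ]; ring
  · rw [hval, pow_add]; norm_num

lemma alternating_wStar_sum_step (W : ℕ → ℝ) {x x' : ZMod 4 → ℕ} {v w : ZMod 4}
    (hw : w = v + 1 ∨ w = v - 1)
    (hx' : ∀ i, x' i = x i + if (v = i ∧ w = i + 1) ∨ (v = i + 1 ∧ w = i) then 1 else 0) :
    ∑ i ∈ Finset.range 4, (-1 : ℝ) ^ i * wStar W (x' i) =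
      ∑ i ∈ Finset.range 4, (-1 : ℝ) ^ i * wStar W (x i) +
        (-1) ^ v.val * if w = v + 1 then 1 / W (x v) else -(1 / W (x (v - 1))) := by
  have hstep : ∀ i, wStar W (x' i) =
      wStar W (x i) + if i = (if w = v + 1 then v else v - 1) then 1 / W (x i) else 0 := by
    intro i
    simp only [hx', wStar_add_ite, ZMod.four_crosses_iff hw]
  simp only [hstep, mul_add, Finset.sum_add_distrib,
    sum_range_neg_one_pow_mul_ite_natCast_eq _ (fun j => 1 / W (x j))]
  split_ifs
  · rfl
  · rw [ZMod.four_neg_one_pow_val_sub_one]; ring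

section

variable {Ω : Type*} {m m0 : MeasurableSpace Ω} {μ : Measure Ω}

lemma integrable_comp_of_le [IsFiniteMeasure μ] {g : Ω → ℕ} (hg : Measurable g) {N : ℕ}
    (hN : ∀ ω, g ω ≤ N) (h : ℕ → ℝ) : Integrable (fun ω => h (g ω)) μ := by
  refine .of_bound (measurable_from_nat.comp hg).aestronglyMeasurable
    (∑ k ∈ Finset.range (N + 1), ‖h k‖) (.of_forall fun ω => ?_)
  exact Finset.single_le_sum (f := fun k => ‖h k‖) (fun _ _ => norm_nonneg _)
    (Finset.mem_range.2 (Nat.lt_succ_of_le (hN ω)))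

lemma condExp_mul_indicator_add [IsFiniteMeasure μ] (hm : m ≤ m0) {f g : Ω → ℝ} {t : Set Ω}
    (hf : StronglyMeasurable[m] f) (hg : StronglyMeasurable[m] g)
    (hfi : Integrable f μ) (hgi : Integrable g μ) (ht : MeasurableSet t) :
    μ[f * t.indicator (fun _ => 1) + g | m] =ᵐ[μ] f * μ[t.indicator (fun _ => 1) | m] + g := by
  have hYi : Integrable (t.indicator fun _ => (1 : ℝ)) μ := (integrable_const 1).indicator ht
  have hfYi : Integrable (f * t.indicator fun _ => (1 : ℝ)) μ := by
    have hfY : f * t.indicator (fun _ => 1) = t.indicator f := by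
      ext ω; by_cases hω : ω ∈ t <;> simp [hω]
    exact hfY ▸ hfi.indicator ht
  filter_upwards [condExp_add hfYi hgi m, condExp_mul_of_stronglyMeasurable_left hf hfYi hYi]
    with ω hsum hprod
  rw [hsum, Pi.add_apply, hprod, condExp_of_stronglyMeasurable hm hg hgi]
  rfl

lemma ae_condExp_eq_zero_of_eq_mul_indicator_add [IsFiniteMeasure μ] (hm : m ≤ m0)
    {Δ f g : Ω → ℝ} {s t : Set Ω} (hΔ : Integrable Δ μ) (hs : MeasurableSet[m] s)
    (ht : MeasurableSet t) (hf : StronglyMeasurable[m] f) (hg : StronglyMeasurable[m] g)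
    (hfi : Integrable f μ) (hgi : Integrable g μ)
    (hΔs : ∀ ω ∈ s, Δ ω = f ω * t.indicator (fun _ => 1) ω + g ω)
    (hzero : ∀ᵐ ω ∂μ, ω ∈ s → f ω * μ[t.indicator (fun _ => 1) | m] ω + g ω = 0) :
    ∀ᵐ ω ∂μ, ω ∈ s → μ[Δ | m] ω = 0 := by
  have hΔs' : s.indicator Δ = s.indicator f * t.indicator (fun _ => 1) + s.indicator g := by
    ext ω
    by_cases hω : ω ∈ s <;> simp [hω, hΔs]
  filter_upwards [condExp_indicator hΔ hs, hzero,
    condExp_mul_indicator_add hm (hf.indicator hs) (hg.indicator hs)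
      (hfi.indicator (hm s hs)) (hgi.indicator (hm s hs)) ht] with ω hind hzero hpull hω
  have hcond := hind.symm.trans (hΔs' ▸ hpull)
  simpa [hω, hzero hω] using hcond

end

/-- The process `κ_n` of the statement. -/
noncomputable def alternatingWStarSum {Ω : Type*} (W : ℕ → ℝ) (X : ℕ → ZMod 4 → Ω → ℕ)
    (n : ℕ) (ω : Ω) : ℝ :=
  ∑ i ∈ Finset.range 4, (-1 : ℝ) ^ i * wStar W (X n i ω)

section ReinforcedWalk

variable {Ω : Type*} {m0 : MeasurableSpace Ω} {ℱ : Filtration ℕ m0}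
  {I : ℕ → Ω → ZMod 4} {X : ℕ → ZMod 4 → Ω → ℕ} {x0 : ZMod 4 → ℕ}

lemma measurable_edgeCount (hIadapted : ∀ n, Measurable[ℱ n] (I n))
    (hX0 : ∀ i ω, X 0 i ω = x0 i)
    (hXrec : ∀ n (i : ZMod 4) ω, X (n + 1) i ω = X n i ω +
      (if (I n ω = i ∧ I (n + 1) ω = i + 1) ∨ (I n ω = i + 1 ∧ I (n + 1) ω = i)
        then 1 else 0)) (n : ℕ) (i : ZMod 4) : Measurable[ℱ n] (X n i) := by
  induction n generalizing i with
  | zero => simp only [funext (hX0 i), measurable_const]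
  | succ n ih =>
    have hIn : Measurable[ℱ (n + 1)] (I n) := (hIadapted n).mono (ℱ.mono n.le_succ) le_rfl
    rw [funext (hXrec n i)]
    exact ((ih i).mono (ℱ.mono n.le_succ) le_rfl).add <| Measurable.ite
      (((hIn (measurableSet_singleton i)).inter (hIadapted _ (measurableSet_singleton _))).union
        ((hIn (measurableSet_singleton _)).inter (hIadapted _ (measurableSet_singleton i))))
      measurable_const measurable_const

lemma edgeCount_le (hX0 : ∀ i ω, X 0 i ω = x0 i)
    (hXrec : ∀ n (i : ZMod 4) ω, X (n + 1) i ω = X n i ω +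
      (if (I n ω = i ∧ I (n + 1) ω = i + 1) ∨ (I n ω = i + 1 ∧ I (n + 1) ω = i)
        then 1 else 0)) (n : ℕ) (i : ZMod 4) (ω : Ω) : X n i ω ≤ x0 i + n := by
  induction n with
  | zero => simp [hX0]
  | succ n ih => rw [hXrec]; split_ifs <;> omega

lemma alternatingWStarSum_succ (W : ℕ → ℝ)
    (hXrec : ∀ n (i : ZMod 4) ω, X (n + 1) i ω = X n i ω +
      (if (I n ω = i ∧ I (n + 1) ω = i + 1) ∨ (I n ω = i + 1 ∧ I (n + 1) ω = i)
        then 1 else 0))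
    (hstep : ∀ n ω, I (n + 1) ω = I n ω + 1 ∨ I (n + 1) ω = I n ω - 1) (n : ℕ) (ω : Ω) :
    alternatingWStarSum W X (n + 1) ω = alternatingWStarSum W X n ω +
      (-1) ^ (I n ω).val * if I (n + 1) ω = I n ω + 1 then 1 / W (X n (I n ω) ω)
        else -(1 / W (X n (I n ω - 1) ω)) :=
  alternating_wStar_sum_step W (hstep n ω) (hXrec n · ω)

lemma measurable_alternatingWStarSum {m : MeasurableSpace Ω} (W : ℕ → ℝ) {n : ℕ}
    (hX : ∀ i, Measurable[m] (X n i)) : Measurable[m] (alternatingWStarSum W X n) :=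
  Finset.measurable_sum _ fun i _ =>
    ((measurable_from_nat (f := wStar W)).comp (hX i)).const_mul _

lemma integrable_alternatingWStarSum {μ : Measure Ω} [IsFiniteMeasure μ] (W : ℕ → ℝ) {n : ℕ}
    {N : ZMod 4 → ℕ} (hX : ∀ i, Measurable (X n i)) (hN : ∀ i ω, X n i ω ≤ N i) :
    Integrable (alternatingWStarSum W X n) μ :=
  integrable_finsetSum _ fun i _ =>
    (integrable_comp_of_le (hX i) (hN i) (wStar W)).const_mul _

lemma ae_condExp_alternatingWStarSum_sub_eq_zero_of_eq (μ : Measure Ω) [IsFiniteMeasure μ]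
    {W : ℕ → ℝ} (hW : ∀ k, 0 < W k) (hIadapted : ∀ n, Measurable[ℱ n] (I n))
    (hXm : ∀ n i, Measurable[ℱ n] (X n i)) (hXle : ∀ n i ω, X n i ω ≤ x0 i + n)
    (hXrec : ∀ n (i : ZMod 4) ω, X (n + 1) i ω = X n i ω +
      (if (I n ω = i ∧ I (n + 1) ω = i + 1) ∨ (I n ω = i + 1 ∧ I (n + 1) ω = i)
        then 1 else 0))
    (hstep : ∀ n ω, I (n + 1) ω = I n ω + 1 ∨ I (n + 1) ω = I n ω - 1)
    (htrans : ∀ n (i : ZMod 4), ∀ᵐ ω ∂μ, I n ω = i →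
      (μ[Set.indicator {ω' | I (n + 1) ω' = i + 1} (fun _ => (1 : ℝ)) | ℱ n]) ω
        = W (X n i ω) / (W (X n i ω) + W (X n (i - 1) ω)))
    (n : ℕ) (v : ZMod 4) :
    ∀ᵐ ω ∂μ, I n ω = v →
      μ[alternatingWStarSum W X (n + 1) - alternatingWStarSum W X n | ℱ n] ω = 0 := by
  have hXm0 : ∀ n i, Measurable (X n i) := fun n i => (hXm n i).mono (ℱ.le n) le_rfl
  have hinv : ∀ j, StronglyMeasurable[ℱ n] fun ω => 1 / W (X n j ω) := fun j =>
    ((measurable_from_nat (f := fun k => 1 / W k)).comp (hXm n j)).stronglyMeasurable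
  have hinvi : ∀ j, Integrable (fun ω => 1 / W (X n j ω)) μ := fun j =>
    integrable_comp_of_le (hXm0 n j) (hXle n j) fun k => 1 / W k
  refine ae_condExp_eq_zero_of_eq_mul_indicator_add (ℱ.le n)
    (f := fun ω => (-1) ^ v.val * (1 / W (X n v ω) + 1 / W (X n (v - 1) ω)))
    (g := fun ω => -((-1) ^ v.val * (1 / W (X n (v - 1) ω))))
    (t := {ω | I (n + 1) ω = v + 1})
    ((integrable_alternatingWStarSum W (hXm0 _) (hXle _)).sub
      (integrable_alternatingWStarSum W (hXm0 _) (hXle _)))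
    (hIadapted n (measurableSet_singleton v))
    ((hIadapted (n + 1)).mono (ℱ.le _) le_rfl (measurableSet_singleton (v + 1)))
    (((hinv v).add (hinv _)).const_mul _) ((hinv _).const_mul _).neg
    (((hinvi v).add (hinvi _)).const_mul _) ((hinvi _).const_mul _).neg ?_ ?_
  · intro ω (hω : I n ω = v)
    subst hω
    rw [Pi.sub_apply, alternatingWStarSum_succ W hXrec hstep]
    by_cases hfwd : I (n + 1) ω = I n ω + 1
    · simp [hfwd]; ring
    · simp [hfwd]
  · filter_upwards [htrans n v] with ω hp hω
    rw [hp hω]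
    have hA := hW (X n v ω)
    have hB := hW (X n (v - 1) ω)
    field_simp
    ring

end ReinforcedWalk

/-- for the edge-reinforced random walk on the square (cycle `ℤ/4ℤ`),
the process `κ n = ∑_{i=0}^{3} (-1)^i W* (X n (e i))` is a martingale, where
`W* m = ∑_{k<m} 1 / W k`. -/
theorem reinforced_walk_square_alternating_martingale
    {Ω : Type*} {m0 : MeasurableSpace Ω} (μ : Measure Ω) [IsProbabilityMeasure μ]
    (ℱ : Filtration ℕ m0)
    (W : ℕ → ℝ) (hW : ∀ k, 0 < W k)
    (I : ℕ → Ω → ZMod 4) (X : ℕ → ZMod 4 → Ω → ℕ) (x0 : ZMod 4 → ℕ)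
    (hIadapted : ∀ n, Measurable[ℱ n] (I n))
    (hX0 : ∀ i ω, X 0 i ω = x0 i)
    (hXrec : ∀ n (i : ZMod 4) ω, X (n + 1) i ω = X n i ω +
      (if (I n ω = i ∧ I (n + 1) ω = i + 1) ∨ (I n ω = i + 1 ∧ I (n + 1) ω = i)
        then 1 else 0))
    (hstep : ∀ n ω, I (n + 1) ω = I n ω + 1 ∨ I (n + 1) ω = I n ω - 1)
    (htrans : ∀ n (i : ZMod 4), ∀ᵐ ω ∂μ, I n ω = i →
      (μ[Set.indicator {ω' | I (n + 1) ω' = i + 1} (fun _ => (1 : ℝ)) | ℱ n]) ω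
        = W (X n i ω) / (W (X n i ω) + W (X n (i - 1) ω))) :
    Martingale (fun n ω => ∑ i ∈ Finset.range 4,
      (-1 : ℝ) ^ i * ∑ k ∈ Finset.range (X n (i : ZMod 4) ω), 1 / W k) ℱ μ := by
  have hXm := measurable_edgeCount hIadapted hX0 hXrec
  have hXle := edgeCount_le hX0 hXrec
  refine martingale_of_condExp_sub_eq_zero_nat (f := alternatingWStarSum W X)
    (fun n => (measurable_alternatingWStarSum W (hXm n)).stronglyMeasurable)
    (fun n => integrable_alternatingWStarSum W (fun i => (hXm n i).mono (ℱ.le n) le_rfl)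
      (hXle n)) fun n => ?_
  have hvertex := fun v => ae_condExp_alternatingWStarSum_sub_eq_zero_of_eq μ hW hIadapted
    hXm hXle hXrec hstep htrans n v
  filter_upwards [ae_all_iff.2 hvertex] with ω hω using hω _ rfl
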